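/- Let k ≥ 2 be an integer and let p be a pattern containing exactly k distinct variables, each of which occurs at least 3 times in p. Then for every n ≥ 0, there are at least 2.94^n words of length n over a 3-letter alphabet that avoid p. -/

import Mathlib

/-- A word `w` is an instance of the pattern `p` if there is a non-erasing
substitution (equivalently, a non-erasing monoid morphism on free monoids)
sending `p` to `w`. -/
def IsInstance {Δ α : Type*} (p : List Δ) (w : List α) : Prop :=
  ∃ f : Δ → List α, (∀ v, f v ≠ []) ∧ (p.map f).flatten = w

/-- A word `w` avoids the pattern `p` if no factor of `w` is an instance of `p`. -/
def Avoids {Δ α : Type*} (w : List α) (p : List Δ) : Prop :=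
  ∀ x : List α, x <:+: w → ¬ IsInstance p x

/-!
Let `g n` be the number of words of length `n` over three letters avoiding `p`, and `I m` the
number of instances of `p` of length `m`. Appending a letter to an avoiding word of length `n`
gives either an avoiding word or a word ending in an instance of `p` preceded by an avoiding
word, so `3 g n ≤ g (n + 1) + ∑ m, g (n + 1 - m) I m`. If `g` has grown by a factor `2.94` at
each step up to `n`, the sum is at most `g n ∑ m, I m / 2.94 ^ (m - 1)`. An instance is determined
by the images of the `k` variables, each occurring at least three times, so this series is at
most `2.94 (β / (1 - β)) ^ k` with `β = 3 / 2.94 ^ 3`, which is below `0.06` once `k ≥ 2`.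
Hence `g (n + 1) ≥ 2.94 g n`.
-/

open Finset

namespace Set

lemma ncard_image2_le {α β γ : Type*} (f : α → β → γ) {s : Set α} {t : Set β}
    (hs : s.Finite) (ht : t.Finite) : (image2 f s t).ncard ≤ s.ncard * t.ncard := by
  rw [← image_prod, ← ncard_prod]
  exact ncard_image_le (hs.prod ht)

lemma ncard_univ_pi {ι : Type*} [Fintype ι] {κ : ι → Type*} (t : ∀ i, Set (κ i)) :
    (univ.pi t).ncard = ∏ i, (t i).ncard := by
  rw [← Nat.card_coe_set_eq, Nat.card_congr (Equiv.Set.univPi t), Nat.card_pi]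
  exact prod_congr rfl fun i _ => Nat.card_coe_set_eq _

lemma ncard_setOf_length_eq (α : Type*) [Fintype α] (n : ℕ) :
    {w : List α | w.length = n}.ncard = Fintype.card α ^ n := by
  have e : {w : List α | w.length = n} ≃ List.Vector α n := Equiv.refl _
  rw [← Nat.card_coe_set_eq, Nat.card_congr e, Nat.card_eq_fintype_card, card_vector]

end Set

section Growth

variable {g : ℕ → ℝ} {x : ℝ}

lemma pow_mul_le_of_forall_mul_le_succ (hx : 0 ≤ x) {n : ℕ}
    (h : ∀ j < n, x * g j ≤ g (j + 1)) {i : ℕ} (hi : i ≤ n) : x ^ i * g (n - i) ≤ g n := by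
  induction i with
  | zero => simp
  | succ i ih =>
    calc x ^ (i + 1) * g (n - (i + 1)) = x ^ i * (x * g (n - (i + 1))) := by ring
      _ ≤ x ^ i * g (n - i) := by
        have hstep := h (n - (i + 1)) (by omega)
        rw [show n - (i + 1) + 1 = n - i by omega] at hstep
        gcongr
      _ ≤ g n := ih (by omega)

lemma mul_le_succ_of_sum_div_pow_le {a : ℕ → ℝ} {q : ℝ} (hx : 0 < x) (hg : ∀ n, 0 ≤ g n)
    (ha : ∀ m, 0 ≤ a m)
    (hstep : ∀ n, q * g n ≤ g (n + 1) + ∑ m ∈ Icc 1 (n + 1), g (n + 1 - m) * a m)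
    (hsum : ∀ N, ∑ m ∈ Icc 1 N, a m / x ^ (m - 1) ≤ q - x) (n : ℕ) :
    x * g n ≤ g (n + 1) := by
  induction n using Nat.strong_induction_on with
  | _ n ih =>
    have hbad : ∑ m ∈ Icc 1 (n + 1), g (n + 1 - m) * a m ≤ (q - x) * g n :=
      calc ∑ m ∈ Icc 1 (n + 1), g (n + 1 - m) * a m
          ≤ ∑ m ∈ Icc 1 (n + 1), a m / x ^ (m - 1) * g n := by
            refine sum_le_sum fun m hm => ?_
            obtain ⟨hm1, hmn⟩ := mem_Icc.mp hm
            have hchain := pow_mul_le_of_forall_mul_le_succ hx.le ih (i := m - 1) (by omega)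
            rw [show n - (m - 1) = n + 1 - m by omega] at hchain
            rw [div_mul_eq_mul_div, mul_comm (g _), le_div_iff₀ (by positivity), mul_assoc]
            exact mul_le_mul_of_nonneg_left (by linarith) (ha m)
        _ ≤ (q - x) * g n := by
            rw [← sum_mul]
            exact mul_le_mul_of_nonneg_right (hsum _) (hg n)
    linarith [hstep n]

lemma geom_sum_Icc_one_le_of_lt_one {r : ℝ} (hr₀ : 0 ≤ r) (hr₁ : r < 1) (N : ℕ) :
    ∑ j ∈ Icc 1 N, r ^ j ≤ r / (1 - r) := by
  simpa [Finset.Ico_add_one_right_eq_Icc] using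
    geom_sum_Ico_le_of_lt_one (m := 1) (n := N + 1) hr₀ hr₁

end Growth

section Patterns

variable {Δ α : Type*}

lemma IsInstance.ne_nil {p : List Δ} (hp : p ≠ []) {x : List α} (h : IsInstance p x) :
    x ≠ [] := by
  obtain ⟨f, hf, rfl⟩ := h
  obtain ⟨v, q, rfl⟩ := List.exists_cons_of_ne_nil hp
  simp [hf v]

lemma Avoids.of_isInfix {p : List Δ} {w u : List α} (hw : Avoids w p) (h : u <:+: w) :
    Avoids u p :=
  fun x hx => hw x (hx.trans h)

lemma avoids_nil {p : List Δ} (hp : p ≠ []) : Avoids ([] : List α) p :=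
  fun _ hx hinst => hinst.ne_nil hp (List.infix_nil.mp hx)

lemma length_flatten_map_eq_sum_count [DecidableEq Δ] (p : List Δ) (f : Δ → List α) :
    (p.map f).flatten.length = ∑ v : p.toFinset, p.count v.1 * (f v).length := by
  rw [List.length_flatten, List.map_map, Finset.sum_list_map_count,
    ← Finset.sum_coe_sort p.toFinset]
  rfl

lemma exists_append_isInstance_of_not_avoids_concat {p : List Δ} (hp : p ≠ []) {w : List α}
    {a : α} (hw : Avoids w p) (hwa : ¬ Avoids (w ++ [a]) p) :
    ∃ u x, u ++ x = w ++ [a] ∧ Avoids u p ∧ IsInstance p x := by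
  simp only [Avoids, not_forall, not_not] at hwa
  obtain ⟨x, hx, hinst⟩ := hwa
  rcases List.infix_concat_iff.mp hx with ⟨u, hu⟩ | hx
  · have hlen : u.length ≤ w.length := by
      have hlen := congrArg List.length hu
      have hx := List.length_pos_iff.mpr (hinst.ne_nil hp)
      simp only [List.length_append, List.length_singleton] at hlen
      omega
    have huw : u <+: w :=
      List.prefix_of_prefix_length_le ⟨x, hu⟩ (List.prefix_append w [a]) hlen
    exact ⟨u, x, hu, hw.of_isInfix huw.isInfix, hinst⟩
  · exact absurd hinst (hw x hx)

end Patterns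

section Counting

variable (α : Type*) {Δ : Type*} (p : List Δ)

def avoidingWords (n : ℕ) : Set (List α) := {w | w.length = n ∧ Avoids w p}

def instancesOfLength (m : ℕ) : Set (List α) := {x | x.length = m ∧ IsInstance p x}

variable {α p}

lemma avoidingWords_zero (hp : p ≠ []) : avoidingWords α p 0 = {[]} := by
  ext w
  simp only [avoidingWords, List.length_eq_zero_iff, Set.mem_ofPred_eq, Set.mem_singleton_iff]
  exact ⟨And.left, fun hw => ⟨hw, hw ▸ avoids_nil hp⟩⟩

variable [Fintype α]

lemma avoidingWords_finite (n : ℕ) : (avoidingWords α p n).Finite :=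
  (List.finite_length_eq α n).subset fun _ hw => hw.1

lemma instancesOfLength_finite (m : ℕ) : (instancesOfLength α p m).Finite :=
  (List.finite_length_eq α m).subset fun _ hx => hx.1

lemma card_mul_ncard_avoidingWords_le (hp : p ≠ []) (n : ℕ) :
    Fintype.card α * (avoidingWords α p n).ncard ≤ (avoidingWords α p (n + 1)).ncard +
      ∑ m ∈ Icc 1 (n + 1),
        (avoidingWords α p (n + 1 - m)).ncard * (instancesOfLength α p m).ncard := by
  set extensions := (fun z : List α × α => z.1 ++ [z.2]) '' (avoidingWords α p n ×ˢ Set.univ)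
  set badWords := ⋃ m ∈ Icc 1 (n + 1),
    Set.image2 (· ++ ·) (avoidingWords α p (n + 1 - m)) (instancesOfLength α p m)
  have hinj : Function.Injective fun z : List α × α => z.1 ++ [z.2] := by
    rintro ⟨w, a⟩ ⟨w', a'⟩ h
    obtain ⟨rfl, h⟩ := List.append_inj' h rfl
    simp_all
  have hcard : extensions.ncard = Fintype.card α * (avoidingWords α p n).ncard := by
    rw [Set.ncard_image_of_injective _ hinj, Set.ncard_prod, Set.ncard_univ,
      Nat.card_eq_fintype_card, mul_comm]
  have hsub : extensions ⊆ avoidingWords α p (n + 1) ∪ badWords := by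
    rintro _ ⟨⟨w, a⟩, ⟨⟨hwn, hw⟩, -⟩, rfl⟩
    by_cases hwa : Avoids (w ++ [a]) p
    · exact Or.inl ⟨by simp [hwn], hwa⟩
    obtain ⟨u, x, hux, hu, hx⟩ := exists_append_isInstance_of_not_avoids_concat hp hw hwa
    have hlen : u.length + x.length = n + 1 := by
      simpa [hwn] using congrArg List.length hux
    have hx1 : 1 ≤ x.length := List.length_pos_iff.mpr (hx.ne_nil hp)
    refine Or.inr (Set.mem_iUnion₂.mpr ⟨x.length, mem_Icc.mpr ⟨hx1, by omega⟩, ?_⟩)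
    exact ⟨u, ⟨by omega, hu⟩, x, ⟨rfl, hx⟩, hux⟩
  have hbad : badWords.Finite := Set.Finite.biUnion (Icc 1 (n + 1)).finite_toSet
    fun _ _ => avoidingWords_finite _ |>.image2 _ (instancesOfLength_finite _)
  calc Fintype.card α * (avoidingWords α p n).ncard = extensions.ncard := hcard.symm
    _ ≤ (avoidingWords α p (n + 1) ∪ badWords).ncard :=
      Set.ncard_le_ncard hsub ((avoidingWords_finite _).union hbad)
    _ ≤ (avoidingWords α p (n + 1)).ncard + badWords.ncard := Set.ncard_union_le _ _
    _ ≤ _ := by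
      gcongr
      refine (Finset.set_ncard_biUnion_le _ _).trans (sum_le_sum fun m _ => ?_)
      exact Set.ncard_image2_le _ (avoidingWords_finite _) (instancesOfLength_finite _)

/-- `l v` is the length of the image of the variable `v`. -/
lemma ncard_instancesOfLength_le [DecidableEq Δ] {m N : ℕ} (hmN : m ≤ N) :
    (instancesOfLength α p m).ncard ≤
      ∑ l ∈ Fintype.piFinset (fun _ : p.toFinset => Icc 1 N) with
        ∑ v, p.count v.1 * l v = m, Fintype.card α ^ ∑ v, l v := by
  set profiles := (Fintype.piFinset fun _ : p.toFinset => Icc 1 N).filter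
    fun l => ∑ v, p.count v.1 * l v = m
  set shaped : (p.toFinset → ℕ) → Set (p.toFinset → List α) :=
    fun l => Set.univ.pi fun v => {w | w.length = l v}
  set subst : (p.toFinset → List α) → List α :=
    fun g => (p.map fun v => if h : v ∈ p.toFinset then g ⟨v, h⟩ else []).flatten
  have hshaped : (⋃ l ∈ profiles, shaped l).Finite := Set.Finite.biUnion profiles.finite_toSet
    fun _ _ => Set.Finite.pi fun _ => List.finite_length_eq α _
  have hsub : instancesOfLength α p m ⊆ subst '' ⋃ l ∈ profiles, shaped l := by
    rintro x ⟨hxm, f, hf, rfl⟩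
    have hlen := length_flatten_map_eq_sum_count p f
    refine ⟨fun v => f v, Set.mem_iUnion₂.mpr ⟨fun v => (f v).length, ?_, fun v _ => rfl⟩, ?_⟩
    · refine mem_filter.mpr ⟨Fintype.mem_piFinset.mpr fun v => mem_Icc.mpr ⟨?_, ?_⟩, ?_⟩
      · exact List.length_pos_iff.mpr (hf v)
      · have hcount : 1 ≤ p.count v.1 := List.count_pos_iff.mpr (List.mem_toFinset.mp v.2)
        calc (f v).length ≤ p.count v.1 * (f v).length := Nat.le_mul_of_pos_left _ hcount
          _ ≤ ∑ v : p.toFinset, p.count v.1 * (f v).length :=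
            single_le_sum (f := fun v : p.toFinset => p.count v.1 * (f v).length)
              (fun _ _ => Nat.zero_le _) (mem_univ v)
          _ ≤ N := by omega
      · beta_reduce
        omega
    · refine congrArg List.flatten (List.map_congr_left fun v hv => ?_)
      rw [dif_pos (List.mem_toFinset.mpr hv)]
  calc (instancesOfLength α p m).ncard
      ≤ (subst '' ⋃ l ∈ profiles, shaped l).ncard :=
        Set.ncard_le_ncard hsub (hshaped.image _)
    _ ≤ (⋃ l ∈ profiles, shaped l).ncard := Set.ncard_image_le hshaped
    _ ≤ ∑ l ∈ profiles, (shaped l).ncard := Finset.set_ncard_biUnion_le _ _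
    _ = ∑ l ∈ profiles, Fintype.card α ^ ∑ v, l v := by
        refine sum_congr rfl fun l _ => ?_
        simp only [shaped, Set.ncard_univ_pi, Set.ncard_setOf_length_eq, prod_pow_eq_pow_sum]

lemma sum_ncard_instancesOfLength_mul_pow_le [DecidableEq Δ] {y : ℝ} (hy : 0 ≤ y) (N : ℕ) :
    ∑ m ∈ Icc 1 N, ((instancesOfLength α p m).ncard : ℝ) * y ^ m ≤
      ∏ v : p.toFinset, ∑ j ∈ Icc 1 N, (Fintype.card α * y ^ p.count v.1) ^ j := by
  set profiles := Fintype.piFinset fun _ : p.toFinset => Icc 1 N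
  set weight : (p.toFinset → ℕ) → ℕ := fun l => ∑ v, p.count v.1 * l v
  set term : (p.toFinset → ℕ) → ℝ := fun l => ∏ v, (Fintype.card α * y ^ p.count v.1) ^ l v
  calc ∑ m ∈ Icc 1 N, ((instancesOfLength α p m).ncard : ℝ) * y ^ m
      ≤ ∑ m ∈ Icc 1 N, ∑ l ∈ profiles with weight l = m,
          (Fintype.card α : ℝ) ^ (∑ v, l v) * y ^ m := by
        refine sum_le_sum fun m hm => ?_
        rw [← sum_mul]
        gcongr
        exact_mod_cast ncard_instancesOfLength_le (mem_Icc.mp hm).2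
    _ = ∑ m ∈ Icc 1 N, ∑ l ∈ profiles with weight l = m, term l := by
        refine sum_congr rfl fun m _ => sum_congr rfl fun l hl => ?_
        rw [← (mem_filter.mp hl).2]
        simp only [term, weight, mul_pow, prod_mul_distrib, ← pow_mul, prod_pow_eq_pow_sum]
    _ ≤ ∑ l ∈ profiles, term l :=
        sum_fiberwise_le_sum_of_sum_fiber_nonneg fun _ _ =>
          sum_nonneg fun _ _ => prod_nonneg fun _ _ => by positivity
    _ = _ := (prod_univ_sum _ _).symm

lemma sum_ncard_instancesOfLength_div_pow_le [DecidableEq Δ] {d : ℕ}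
    (hocc : ∀ v ∈ p, d ≤ p.count v) {x : ℝ} (hx : 1 ≤ x) (hβ : Fintype.card α / x ^ d < 1) (N : ℕ) :
    ∑ m ∈ Icc 1 N, ((instancesOfLength α p m).ncard : ℝ) / x ^ (m - 1) ≤
      x * (Fintype.card α / x ^ d / (1 - Fintype.card α / x ^ d)) ^ p.toFinset.card := by
  set β : ℝ := Fintype.card α / x ^ d
  have hx₀ : 0 < x := by linarith
  have hβ₀ : 0 ≤ β := by positivity
  have hfactor : ∀ v : p.toFinset, (Fintype.card α : ℝ) * x⁻¹ ^ p.count v.1 ≤ β := by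
    intro v
    rw [inv_pow, ← div_eq_mul_inv]
    exact div_le_div_of_nonneg_left (by positivity) (by positivity)
      (pow_le_pow_right₀ hx (hocc v.1 (List.mem_toFinset.mp v.2)))
  calc ∑ m ∈ Icc 1 N, ((instancesOfLength α p m).ncard : ℝ) / x ^ (m - 1)
      = x * ∑ m ∈ Icc 1 N, ((instancesOfLength α p m).ncard : ℝ) * x⁻¹ ^ m := by
        rw [mul_sum]
        refine sum_congr rfl fun m hm => ?_
        obtain ⟨k, rfl⟩ := Nat.exists_eq_add_of_le' (mem_Icc.mp hm).1
        rw [inv_pow, pow_succ, Nat.add_sub_cancel]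
        field_simp
    _ ≤ x * ∏ v : p.toFinset, ∑ j ∈ Icc 1 N, β ^ j := by
        refine mul_le_mul_of_nonneg_left ?_ hx₀.le
        refine (sum_ncard_instancesOfLength_mul_pow_le (by positivity) N).trans ?_
        gcongr with v _ j
        exact hfactor v
    _ ≤ x * (β / (1 - β)) ^ p.toFinset.card := by
        rw [prod_const, card_univ, Fintype.card_coe]
        gcongr
        exact geom_sum_Icc_one_le_of_lt_one hβ₀ hβ N

end Counting

/-- If each of the `k ≥ 2` variables of `p` occurs at least 3 times, then for
every `n` there are at least `2.94 ^ n` words of length `n` over a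
3-letter alphabet avoiding `p`. -/
theorem growth_three {Δ : Type*} [DecidableEq Δ] (k : ℕ) (hk : 2 ≤ k)
    (p : List Δ) (hvars : p.toFinset.card = k)
    (hocc : ∀ v ∈ p, 3 ≤ p.count v) (n : ℕ) :
    ((2.94 : ℝ) ^ n) ≤
      ({w : List (Fin 3) | w.length = n ∧ Avoids w p}).ncard := by
  have hp : p ≠ [] := by
    rintro rfl
    rw [List.toFinset_nil, Finset.card_empty] at hvars
    omega
  set g : ℕ → ℝ := fun n => (avoidingWords (Fin 3) p n).ncard
  set a : ℕ → ℝ := fun m => (instancesOfLength (Fin 3) p m).ncard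
  have hstep (n : ℕ) : 3 * g n ≤ g (n + 1) + ∑ m ∈ Icc 1 (n + 1), g (n + 1 - m) * a m := by
    have h := card_mul_ncard_avoidingWords_le (α := Fin 3) hp n
    rw [Fintype.card_fin] at h
    simp only [g, a]
    exact_mod_cast h
  have hsum (N : ℕ) : ∑ m ∈ Icc 1 N, a m / 2.94 ^ (m - 1) ≤ 3 - 2.94 := by
    refine (sum_ncard_instancesOfLength_div_pow_le hocc (by norm_num) (by norm_num) N).trans ?_
    rw [hvars, Fintype.card_fin]
    calc (2.94 : ℝ) * (3 / 2.94 ^ 3 / (1 - 3 / 2.94 ^ 3)) ^ k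
        ≤ 2.94 * (3 / 2.94 ^ 3 / (1 - 3 / 2.94 ^ 3)) ^ 2 :=
          mul_le_mul_of_nonneg_left
            (pow_le_pow_of_le_one (by norm_num) (by norm_num) hk) (by norm_num)
      _ ≤ 3 - 2.94 := by norm_num
  have hgrowth := mul_le_succ_of_sum_div_pow_le (by norm_num) (fun _ => by positivity)
    (fun _ => by positivity) hstep hsum
  have h := pow_mul_le_of_forall_mul_le_succ (by norm_num) (fun j _ => hgrowth j) (le_refl n)
  simp only [g, Nat.sub_self, avoidingWords_zero hp, Set.ncard_singleton, Nat.cast_one,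
    mul_one] at h
  exact h
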